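/- arXiv:2605.09905 — 2 statements merged into one kernel-verified Lean document; each statement's English description precedes it below -/
import Mathlib

section
/- Let s : Fin T → ℝ with |s_t| ≤ ε for all t, where 0 ≤ ε. Then the softmax weights a_p = exp(s_p)/Σ_t exp(s_t) satisfy |a_p − 1/T| ≤ (e^{2ε} − 1)/T for every p. -/
/-! If `|s t| ≤ ε` for all `t`, any two softmax numerators are within a factor `r = e^{2ε}` of
each other. Comparing `exp (s p)` with the sum of the numerators then traps the softmax weight
between `r⁻¹ / T` and `r / T`, and `r + r⁻¹ ≥ 2` turns this into the symmetric bound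
`(r - 1) / T` around `1 / T`. -/

open Finset

theorem div_sum_mem_Icc_of_le_mul {ι : Type*} [Fintype ι] {w : ι → ℝ} {r : ℝ}
    (hw : ∀ t, 0 < w t) (hr : ∀ t u, w t ≤ r * w u) (p : ι) :
    w p / ∑ t, w t ∈ Set.Icc (r⁻¹ / Fintype.card ι) (r / Fintype.card ι) := by
  have hsum : 0 < ∑ t, w t := sum_pos (fun t _ => hw t) ⟨p, mem_univ p⟩
  have hcard : (0 : ℝ) < Fintype.card ι := by exact_mod_cast Fintype.card_pos_iff.mpr ⟨p⟩
  have hr0 : 0 < r := pos_of_mul_pos_left ((hw p).trans_le (hr p p)) (hw p).le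
  have hlower : ∑ t, w t ≤ Fintype.card ι * r * w p := by
    simpa [mul_assoc] using sum_le_sum fun t (_ : t ∈ univ) => hr t p
  have hupper : Fintype.card ι * w p ≤ r * ∑ t, w t := by
    simpa [mul_sum] using sum_le_sum fun t (_ : t ∈ univ) => hr p t
  constructor
  · rw [div_le_div_iff₀ hcard hsum, inv_mul_le_iff₀ hr0]
    linarith
  · rw [div_le_div_iff₀ hsum hcard]
    linarith

theorem abs_sub_inv_le_of_mem_Icc {x r n : ℝ} (hr : 0 < r) (hn : 0 < n)
    (hx : x ∈ Set.Icc (r⁻¹ / n) (r / n)) : |x - 1 / n| ≤ (r - 1) / n := by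
  have hinv : 1 - r⁻¹ ≤ r - 1 := by
    have hsq : r - 1 - (1 - r⁻¹) = (r - 1) ^ 2 / r := by field_simp
    have : 0 ≤ (r - 1) ^ 2 / r := by positivity
    linarith
  rw [abs_sub_le_iff]
  constructor
  · calc x - 1 / n ≤ r / n - 1 / n := by linarith [hx.2]
      _ = (r - 1) / n := by ring
  · calc 1 / n - x ≤ 1 / n - r⁻¹ / n := by linarith [hx.1]
      _ = (1 - r⁻¹) / n := by ring
      _ ≤ (r - 1) / n := by gcongr

theorem softmax_near_uniform_general (T : ℕ) (s : Fin T → ℝ)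
    (ε : ℝ) (hs : ∀ t, |s t| ≤ ε) (p : Fin T) :
    |Real.exp (s p) / (∑ t, Real.exp (s t)) - 1 / (T : ℝ)| ≤
      (Real.exp (2 * ε) - 1) / (T : ℝ) := by
  have hratio : ∀ t u, Real.exp (s t) ≤ Real.exp (2 * ε) * Real.exp (s u) := by
    intro t u
    rw [← Real.exp_add, Real.exp_le_exp]
    linarith [(abs_le.mp (hs t)).2, (abs_le.mp (hs u)).1]
  have hT : (0 : ℝ) < T := by exact_mod_cast Fin.pos p
  have hweight := div_sum_mem_Icc_of_le_mul (fun t => Real.exp_pos (s t)) hratio p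
  rw [Fintype.card_fin] at hweight
  exact abs_sub_inv_le_of_mem_Icc (Real.exp_pos _) hT hweight

/-- If all logits are bounded by `ε`, the softmax weights are within
`(e^{2ε} - 1)/T` of the uniform weight `1/T`. -/
theorem softmax_near_uniform (T : ℕ) (hT : 0 < T) (s : Fin T → ℝ)
    (ε : ℝ) (hε : 0 ≤ ε) (hs : ∀ t, |s t| ≤ ε) (p : Fin T) :
    |Real.exp (s p) / (∑ t, Real.exp (s t)) - 1 / (T : ℝ)| ≤
      (Real.exp (2 * ε) - 1) / (T : ℝ) :=
  softmax_near_uniform_general T s ε hs p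
end

section
/- Let s_{ip} = (1/√{d_k}) Σ_{r=1}^{d_k} u^Q_{i,r} u^K_{p,r} where for each r, u^Q_{·,r} = ⟨x_·, w^Q_r⟩ and u^K_{·,r} = ⟨x_·, w^K_r⟩ with (w^Q_r), (w^K_r) mutually independent zero-mean random vectors with i.i.d. entries of variance σ_Q², σ_K². Then E[s_{ip} s_{jq}] = σ_Q² σ_K² ⟨x_i, x_j⟩ ⟨x_p, x_q⟩. -/
open MeasureTheory ProbabilityTheory
open scoped InnerProductSpace

lemma quad_coeff_zero (μ : Measure ℝ) [IsProbabilityMeasure μ]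
    (hbad : ¬ Integrable (fun z => z ^ 2) μ) {a b c : ℝ}
    (hint : Integrable (fun z => a * z ^ 2 + b * z + c) μ) : a = 0 := by
  by_contra ha
  have hA : (0:ℝ) < |a| := abs_pos.mpr ha
  set f : ℝ → ℝ := fun z => a * z ^ 2 + b * z + c with hf
  have hg : Integrable (fun z => (2 * |f z| * |a| + |b| ^ 2 + 2 * |a| * |c|) / |a| ^ 2) μ := by
    refine Integrable.div_const ?_ _
    refine (((hint.abs.const_mul 2).mul_const |a|).add (integrable_const (|b| ^ 2 + 2 * |a| * |c|))).congr ?_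
    filter_upwards with z; simp only [Pi.add_apply, sq_abs]; ring
  refine hbad (Integrable.mono' hg ((measurable_id.pow_const 2).aestronglyMeasurable) ?_)
  filter_upwards with z
  rw [Real.norm_eq_abs, abs_of_nonneg (sq_nonneg z), le_div_iff₀ (by positivity)]
  have h1 : |a * z ^ 2| ≤ |f z| + (|b| * |z| + |c|) := by
    have : a * z ^ 2 = f z - (b * z + c) := by simp only [hf]; ring
    rw [this]
    refine (abs_sub _ _).trans ?_
    gcongr
    exact (abs_add_le _ _).trans (by gcongr; exact abs_mul b z |>.le)
  have h2 : |a * z ^ 2| = |a| * z ^ 2 := by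
    rw [abs_mul, abs_of_nonneg (sq_nonneg z)]
  nlinarith [sq_nonneg (|a| * |z| - |b|), sq_abs z, abs_nonneg (f z), abs_nonneg b, abs_nonneg c,
    mul_le_mul_of_nonneg_left h1 hA.le]

lemma fiber_integral (μ : Measure ℝ) [IsProbabilityMeasure μ]
    (hbad : ¬ Integrable (fun z => z ^ 2) μ) (hmean : ∫ z, z ∂μ = 0) (a b c : ℝ)
    (hint : Integrable (fun z => a * z ^ 2 + b * z + c) μ) :
    ∫ z, (a * z ^ 2 + b * z + c) ∂μ = c := by
  have ha : a = 0 := quad_coeff_zero μ hbad hint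
  subst ha
  simp only [zero_mul, zero_add] at hint ⊢
  by_cases hb : b = 0
  · subst hb; simp
  · have hid : Integrable (fun z => z) μ := by
      have h1 : Integrable (fun z => (1 / b) * ((b * z + c) - c)) μ :=
        ((hint.sub (integrable_const c)).const_mul (1 / b))
      refine h1.congr ?_
      filter_upwards with z; field_simp; ring
    rw [integral_add (hid.const_mul b) (integrable_const c), integral_const_mul, hmean]
    simp

lemma subst_integral {Ω : Type*} [MeasureSpace Ω] [IsProbabilityMeasure (ℙ : Measure Ω)]
    {E : Type*} [MeasurableSpace E] (Z : Ω → ℝ) (V : Ω → E)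
    (hZ : Measurable Z) (hV : Measurable V) (hZV : IndepFun Z V ℙ)
    (hmean : ∫ ω, Z ω = 0) (hbad : ¬ Integrable (fun ω => Z ω ^ 2) ℙ)
    (α β γ : E → ℝ) (hα : Measurable α) (hβ : Measurable β) (hγ : Measurable γ)
    (hint : Integrable (fun ω => α (V ω) * Z ω ^ 2 + β (V ω) * Z ω + γ (V ω)) ℙ) :
    ∫ ω, (α (V ω) * Z ω ^ 2 + β (V ω) * Z ω + γ (V ω)) = ∫ ω, γ (V ω) := by
  set μ := Measure.map Z ℙ with hμ
  set ν := Measure.map V ℙ with hν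
  haveI : IsProbabilityMeasure μ := Measure.isProbabilityMeasure_map hZ.aemeasurable
  haveI : IsProbabilityMeasure ν := Measure.isProbabilityMeasure_map hV.aemeasurable
  have hmap : Measure.map (fun ω => (Z ω, V ω)) ℙ = μ.prod ν :=
    (indepFun_iff_map_prod_eq_prod_map_map hZ.aemeasurable hV.aemeasurable).1 hZV
  set f : ℝ × E → ℝ := fun p => α p.2 * p.1 ^ 2 + β p.2 * p.1 + γ p.2 with hfdef
  have hf : Measurable f :=
    (((hα.comp measurable_snd).mul (measurable_fst.pow_const 2)).add
      ((hβ.comp measurable_snd).mul measurable_fst)).add (hγ.comp measurable_snd)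
  have hpair : Measurable (fun ω => (Z ω, V ω)) := hZ.prodMk hV
  have h1 : ∫ ω, (α (V ω) * Z ω ^ 2 + β (V ω) * Z ω + γ (V ω)) = ∫ p, f p ∂(μ.prod ν) := by
    rw [← hmap, integral_map hpair.aemeasurable hf.aestronglyMeasurable]
  have hfint : Integrable f (μ.prod ν) := by
    rw [← hmap, integrable_map_measure hf.aestronglyMeasurable hpair.aemeasurable]
    exact hint
  have hmeanμ : ∫ z, z ∂μ = 0 := by
    rw [hμ]
    exact (integral_map hZ.aemeasurable measurable_id.aestronglyMeasurable).trans hmean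
  have hbadμ : ¬ Integrable (fun z => z ^ 2) μ := by
    intro h
    exact hbad ((integrable_map_measure
      ((measurable_id.pow_const 2).aestronglyMeasurable) hZ.aemeasurable).1 h)
  rw [h1, integral_prod_symm f hfint]
  have h2 : ∫ v, (∫ z, f (z, v) ∂μ) ∂ν = ∫ v, γ v ∂ν := by
    refine integral_congr_ae ?_
    filter_upwards [hfint.prod_left_ae] with v hv
    exact fiber_integral μ hbadμ hmeanμ (α v) (β v) (γ v) hv
  rw [h2, hν, integral_map hV.aemeasurable hγ.aestronglyMeasurable]
open scoped Classical in
lemma zero_caseQ {Ω : Type*} [MeasureSpace Ω] [IsProbabilityMeasure (ℙ : Measure Ω)]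
    (d dk : ℕ) (c : ℝ) (xi xj xp xq : Fin d → ℝ) :
    ∀ (n : ℕ) (wQ wK : Ω → Fin dk → Fin d → ℝ),
    (∀ r a, Measurable fun ω => wQ ω r a) → (∀ r a, Measurable fun ω => wK ω r a) →
    iIndepFun
      (fun (e : (Fin dk ⊕ Fin dk) × Fin d) ω => Sum.elim (fun r => wQ ω r e.2) (fun r => wK ω r e.2) e.1) ℙ →
    (∀ r a, ∫ ω, wQ ω r a = 0) → (∀ r a, ∫ ω, (wQ ω r a) ^ 2 = 0) →
    (Finset.univ.filter fun p : Fin dk × Fin d =>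
      ¬ (fun ω => wQ ω p.1 p.2) =ᵐ[ℙ] (fun _ => 0)).card ≤ n →
    ∫ ω, (c * ∑ r, (∑ a, xi a * wQ ω r a) * (∑ a, xp a * wK ω r a)) *
          (c * ∑ r, (∑ a, xj a * wQ ω r a) * (∑ a, xq a * wK ω r a)) = 0 := by
  intro n
  induction n with
  | zero =>
    intro wQ wK hmQ hmK hind hmean hvar hcard
    have hall : ∀ p : Fin dk × Fin d, (fun ω => wQ ω p.1 p.2) =ᵐ[ℙ] (fun _ => 0) := by
      intro p
      by_contra hne
      have hmem : p ∈ Finset.univ.filter fun p : Fin dk × Fin d =>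
          ¬ (fun ω => wQ ω p.1 p.2) =ᵐ[ℙ] (fun _ => 0) :=
        Finset.mem_filter.2 ⟨Finset.mem_univ _, hne⟩
      have := Finset.card_pos.2 ⟨p, hmem⟩
      omega
    have hae : ∀ᵐ ω ∂ℙ, ∀ p : Fin dk × Fin d, wQ ω p.1 p.2 = 0 := ae_all_iff.2 hall
    have hzero : (fun ω => (c * ∑ r, (∑ a, xi a * wQ ω r a) * (∑ a, xp a * wK ω r a)) *
          (c * ∑ r, (∑ a, xj a * wQ ω r a) * (∑ a, xq a * wK ω r a))) =ᵐ[ℙ]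
          (fun _ => 0) := by
      filter_upwards [hae] with ω hω
      have h1 : ∑ r, (∑ a, xi a * wQ ω r a) * (∑ a, xp a * wK ω r a) = 0 :=
        Finset.sum_eq_zero fun r _ => by
          rw [Finset.sum_eq_zero fun a _ => by rw [hω (r, a)]; ring, zero_mul]
      have h2 : ∑ r, (∑ a, xj a * wQ ω r a) * (∑ a, xq a * wK ω r a) = 0 :=
        Finset.sum_eq_zero fun r _ => by
          rw [Finset.sum_eq_zero fun a _ => by rw [hω (r, a)]; ring, zero_mul]
      rw [h1, h2]; ring
    rw [integral_congr_ae hzero, integral_zero]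
  | succ n IH =>
    intro wQ wK hmQ hmK hind hmean hvar hcard
    by_cases hle : (Finset.univ.filter fun p : Fin dk × Fin d =>
        ¬ (fun ω => wQ ω p.1 p.2) =ᵐ[ℙ] (fun _ => 0)).card ≤ n
    · exact IH wQ wK hmQ hmK hind hmean hvar hle
    have hpos : 0 < (Finset.univ.filter fun p : Fin dk × Fin d =>
        ¬ (fun ω => wQ ω p.1 p.2) =ᵐ[ℙ] (fun _ => 0)).card := by omega
    obtain ⟨⟨r₀, a₀⟩, hp₀⟩ := Finset.card_pos.1 hpos
    have hbadp : ¬ (fun ω => wQ ω r₀ a₀) =ᵐ[ℙ] (fun _ => 0) := (Finset.mem_filter.1 hp₀).2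
    have hbadInt : ¬ Integrable (fun ω => (wQ ω r₀ a₀) ^ 2) ℙ := by
      intro h
      apply hbadp
      have h0 := (integral_eq_zero_iff_of_nonneg
        (fun ω => sq_nonneg (wQ ω r₀ a₀)) h).1 (hvar r₀ a₀)
      filter_upwards [h0] with ω hω
      exact pow_eq_zero_iff two_ne_zero |>.1 hω
    set ι := (Fin dk ⊕ Fin dk) × Fin d with hι
    set F : ι → Ω → ℝ :=
      fun e ω => Sum.elim (fun r => wQ ω r e.2) (fun r => wK ω r e.2) e.1 with hF
    have hFmeas : ∀ e, Measurable (F e) := by rintro ⟨(r | r), a⟩; exacts [hmQ r a, hmK r a]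
    set e₀ : ι := (Sum.inl r₀, a₀) with he₀
    set wQ' : Ω → Fin dk → Fin d → ℝ :=
      fun ω r a => if r = r₀ ∧ a = a₀ then 0 else wQ ω r a with hwQ'
    set Z : Ω → ℝ := fun ω => wQ ω r₀ a₀ with hZdef
    set V : Ω → ι → ℝ :=
      fun ω e => Sum.elim (fun r => wQ' ω r e.2) (fun r => wK ω r e.2) e.1 with hV
    have hmQ' : ∀ r a, Measurable fun ω => wQ' ω r a := by
      intro r a
      by_cases h : r = r₀ ∧ a = a₀
      · simpa [hwQ', h] using measurable_const
      · simpa [hwQ', h] using hmQ r a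
    have hVmeas : Measurable V :=
      measurable_pi_lambda _ (by rintro ⟨(r | r), a⟩; exacts [hmQ' r a, hmK r a])
    -- independence of Z and V
    have hZV : IndepFun Z V ℙ := by
      have hdisj : Disjoint ({e₀} : Finset ι) (Finset.univ.erase e₀) :=
        Finset.disjoint_singleton_left.2 (Finset.notMem_erase _ _)
      have h1 := hind.indepFun_finset {e₀} (Finset.univ.erase e₀) hdisj hFmeas
      set φ₁ : (({e₀} : Finset ι) → ℝ) → ℝ :=
        fun u => u ⟨e₀, Finset.mem_singleton_self e₀⟩ with hφ₁def
      set T : Finset ι := Finset.univ.erase e₀ with hT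
      set φ₂ : (↥T → ℝ) → ι → ℝ :=
        fun u e => if h : e = e₀ then 0
          else u ⟨e, show e ∈ T from Finset.mem_erase.2 ⟨h, Finset.mem_univ e⟩⟩ with hφ₂def
      have hφ₁ : Measurable φ₁ := measurable_pi_apply _
      have hφ₂ : Measurable φ₂ := by
        refine measurable_pi_lambda _ fun e => ?_
        by_cases h : e = e₀
        · simpa [hφ₂def, h] using measurable_const
        · simpa [hφ₂def, h] using measurable_pi_apply _
      have h2 := h1.comp hφ₁ hφ₂
      have hZeq : (φ₁ ∘ fun ω (i : ({e₀} : Finset ι)) => F i ω) = Z := rfl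
      have hVeq : (φ₂ ∘ fun ω (i : ↥T) => F i ω) = V := by
        funext ω e
        show φ₂ (fun i : ↥T => F i ω) e = V ω e
        by_cases h : e = e₀
        · subst h
          simp [hφ₂def, hV, hwQ', he₀]
        · obtain ⟨(r | r), a⟩ := e
          · have hra : ¬ (r = r₀ ∧ a = a₀) := by
              intro ⟨h1', h2'⟩; exact h (by simp [he₀, h1', h2'])
            simp [hφ₂def, h, hV, hF, hwQ', hra]
          · simp [hφ₂def, h, hV, hF]
      rw [hZeq, hVeq] at h2
      exact h2
    -- quadratic decomposition in Z
    set SIP : (Fin d → ℝ) → (Fin d → ℝ) → (ι → ℝ) → ℝ :=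
      fun x y u => c * ∑ r, (∑ a, x a * u (Sum.inl r, a)) * (∑ a, y a * u (Sum.inr r, a))
      with hSIP
    set KP : (Fin d → ℝ) → (ι → ℝ) → ℝ :=
      fun y u => ∑ a, y a * u (Sum.inr r₀, a) with hKP
    set α : (ι → ℝ) → ℝ :=
      fun u => (c * xi a₀ * KP xp u) * (c * xj a₀ * KP xq u) with hα
    set β : (ι → ℝ) → ℝ :=
      fun u => (c * xi a₀ * KP xp u) * SIP xj xq u + (c * xj a₀ * KP xq u) * SIP xi xp u
      with hβ
    set γ : (ι → ℝ) → ℝ := fun u => SIP xi xp u * SIP xj xq u with hγ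
    have hSIPmeas : ∀ x y, Measurable (SIP x y) := by
      intro x y
      apply Measurable.const_mul
      refine Finset.measurable_sum _ fun r _ => Measurable.mul ?_ ?_ <;>
        exact Finset.measurable_sum _ fun a _ => (measurable_pi_apply _).const_mul _
    have hKPmeas : ∀ y, Measurable (KP y) :=
      fun y => Finset.measurable_sum _ fun a _ => (measurable_pi_apply _).const_mul _
    have hαm : Measurable α := ((hKPmeas xp).const_mul _).mul ((hKPmeas xq).const_mul _)
    have hβm : Measurable β :=
      (((hKPmeas xp).const_mul _).mul (hSIPmeas xj xq)).add
        (((hKPmeas xq).const_mul _).mul (hSIPmeas xi xp))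
    have hγm : Measurable γ := (hSIPmeas xi xp).mul (hSIPmeas xj xq)
    -- the per-factor affine decomposition
    have hfac : ∀ (x y : Fin d → ℝ) (ω : Ω),
        (c * ∑ r, (∑ a, x a * wQ ω r a) * (∑ a, y a * wK ω r a)) =
          SIP x y (V ω) + (c * x a₀ * KP y (V ω)) * Z ω := by
      intro x y ω
      have hQsum : ∀ r, (∑ a, x a * wQ ω r a) =
          (∑ a, x a * V ω (Sum.inl r, a)) + (if r = r₀ then x a₀ * Z ω else 0) := by
        intro r
        have h1 : (∑ a, x a * wQ ω r a) =
            ∑ a, (x a * V ω (Sum.inl r, a) + if r = r₀ ∧ a = a₀ then x a₀ * Z ω else 0) := by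
          refine Finset.sum_congr rfl fun a _ => ?_
          by_cases h : r = r₀ ∧ a = a₀
          · obtain ⟨h1', h2'⟩ := h
            subst h1'; subst h2'
            simp [hV, hwQ', hZdef]
          · simp [hV, hwQ', h]
        rw [h1, Finset.sum_add_distrib]
        congr 1
        by_cases hr : r = r₀
        · subst hr
          simp only [true_and, if_true]
          rw [Finset.sum_ite_eq' Finset.univ a₀ (fun _ => x a₀ * Z ω)]
          simp
        · simp [hr]
      have hKsum : ∀ r, (∑ a, y a * wK ω r a) = ∑ a, y a * V ω (Sum.inr r, a) := by
        intro r
        refine Finset.sum_congr rfl fun a _ => ?_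
        simp [hV]
      calc (c * ∑ r, (∑ a, x a * wQ ω r a) * (∑ a, y a * wK ω r a))
          = c * ∑ r, (((∑ a, x a * V ω (Sum.inl r, a)) * (∑ a, y a * V ω (Sum.inr r, a)))
              + (if r = r₀ then (x a₀ * Z ω) * (∑ a, y a * V ω (Sum.inr r, a)) else 0)) := by
            congr 1
            refine Finset.sum_congr rfl fun r _ => ?_
            rw [hQsum r, hKsum r, add_mul, ite_mul, zero_mul]
        _ = SIP x y (V ω) + (c * x a₀ * KP y (V ω)) * Z ω := by
            rw [Finset.sum_add_distrib, Finset.sum_ite_eq' Finset.univ r₀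
              (fun r => (x a₀ * Z ω) * (∑ a, y a * V ω (Sum.inr r, a)))]
            simp only [Finset.mem_univ, if_true, hSIP, hKP]
            ring
    have hdecomp : ∀ ω,
        (c * ∑ r, (∑ a, xi a * wQ ω r a) * (∑ a, xp a * wK ω r a)) *
          (c * ∑ r, (∑ a, xj a * wQ ω r a) * (∑ a, xq a * wK ω r a)) =
        α (V ω) * Z ω ^ 2 + β (V ω) * Z ω + γ (V ω) := by
      intro ω
      rw [hfac xi xp ω, hfac xj xq ω]
      simp only [hα, hβ, hγ]
      ring
    by_cases hI : Integrable (fun ω =>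
        (c * ∑ r, (∑ a, xi a * wQ ω r a) * (∑ a, xp a * wK ω r a)) *
          (c * ∑ r, (∑ a, xj a * wQ ω r a) * (∑ a, xq a * wK ω r a))) ℙ
    · have hI' : Integrable (fun ω => α (V ω) * Z ω ^ 2 + β (V ω) * Z ω + γ (V ω)) ℙ :=
        hI.congr (Filter.Eventually.of_forall hdecomp)
      have hstep1 : ∫ ω, (c * ∑ r, (∑ a, xi a * wQ ω r a) * (∑ a, xp a * wK ω r a)) *
          (c * ∑ r, (∑ a, xj a * wQ ω r a) * (∑ a, xq a * wK ω r a)) =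
          ∫ ω, (α (V ω) * Z ω ^ 2 + β (V ω) * Z ω + γ (V ω)) :=
        integral_congr_ae (Filter.Eventually.of_forall hdecomp)
      have hstep2 := subst_integral Z V (hmQ r₀ a₀) hVmeas hZV (hmean r₀ a₀) hbadInt
        α β γ hαm hβm hγm hI'
      rw [hstep1, hstep2]
      -- now apply the induction hypothesis to wQ'
      have hind' : iIndepFun
          (fun (e : (Fin dk ⊕ Fin dk) × Fin d) ω => Sum.elim (fun r => wQ' ω r e.2) (fun r => wK ω r e.2) e.1) ℙ := by
        set g : ι → ℝ → ℝ := fun e => if e = e₀ then (fun _ => 0) else id with hg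
        have hgm : ∀ e, Measurable (g e) := by
          intro e
          by_cases h : e = e₀
          · simpa [hg, h] using measurable_const
          · simpa [hg, h] using measurable_id
        have h3 := hind.comp g hgm
        have hfe : (fun (e : ι) ω => Sum.elim (fun r => wQ' ω r e.2)
            (fun r => wK ω r e.2) e.1) = fun e => g e ∘ F e := by
          funext e ω
          obtain ⟨(r | r), a⟩ := e
          · by_cases h : r = r₀ ∧ a = a₀
            · obtain ⟨h1', h2'⟩ := h
              subst h1'; subst h2'
              simp [hg, hwQ', hF, he₀]
            · have hne : ((Sum.inl r : Fin dk ⊕ Fin dk), a) ≠ e₀ := by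
                intro hcontra
                rw [he₀] at hcontra
                exact h ⟨by simpa using congrArg (fun p => p.1) hcontra,
                  by simpa using congrArg (fun p => p.2) hcontra⟩
              simp [hg, hwQ', hF, h, hne]
          · have hne : ((Sum.inr r : Fin dk ⊕ Fin dk), a) ≠ e₀ := by simp [he₀]
            simp [hg, hF, hne]
        rw [hfe]
        exact h3
      have hmean' : ∀ r a, ∫ ω, wQ' ω r a = 0 := by
        intro r a
        by_cases h : r = r₀ ∧ a = a₀
        · simp [hwQ', h]
        · simpa [hwQ', h] using hmean r a
      have hvar' : ∀ r a, ∫ ω, (wQ' ω r a) ^ 2 = 0 := by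
        intro r a
        by_cases h : r = r₀ ∧ a = a₀
        · simp [hwQ', h]
        · simpa [hwQ', h] using hvar r a
      have hcard' : (Finset.univ.filter fun p : Fin dk × Fin d =>
          ¬ (fun ω => wQ' ω p.1 p.2) =ᵐ[ℙ] (fun _ => 0)).card ≤ n := by
        have hsub : (Finset.univ.filter fun p : Fin dk × Fin d =>
            ¬ (fun ω => wQ' ω p.1 p.2) =ᵐ[ℙ] (fun _ => 0)) ⊆
            (Finset.univ.filter fun p : Fin dk × Fin d =>
            ¬ (fun ω => wQ ω p.1 p.2) =ᵐ[ℙ] (fun _ => 0)).erase (r₀, a₀) := by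
          intro p hp
          have hp2 := (Finset.mem_filter.1 hp).2
          have hpne : p ≠ (r₀, a₀) := by
            intro hcontra
            subst hcontra
            refine hp2 (Filter.Eventually.of_forall fun ω => ?_)
            simp [hwQ']
          refine Finset.mem_erase.2 ⟨hpne, Finset.mem_filter.2 ⟨Finset.mem_univ _, ?_⟩⟩
          intro hcontra
          refine hp2 ?_
          have hpcond : ¬ (p.1 = r₀ ∧ p.2 = a₀) := by
            intro ⟨h1', h2'⟩
            exact hpne (Prod.ext h1' h2')
          refine hcontra.mono fun ω hω => ?_
          simpa [hwQ', hpcond] using hω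
        have h4 := Finset.card_le_card hsub
        rw [Finset.card_erase_of_mem hp₀] at h4
        omega
      exact IH wQ' wK hmQ' hmK hind' hmean' hvar' hcard'
    · rw [integral_undef hI]
open scoped Classical in
lemma zero_caseK {Ω : Type*} [MeasureSpace Ω] [IsProbabilityMeasure (ℙ : Measure Ω)]
    (d dk : ℕ) (c : ℝ) (xi xj xp xq : Fin d → ℝ) :
    ∀ (n : ℕ) (wQ wK : Ω → Fin dk → Fin d → ℝ),
    (∀ r a, Measurable fun ω => wQ ω r a) → (∀ r a, Measurable fun ω => wK ω r a) →
    iIndepFun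
      (fun (e : (Fin dk ⊕ Fin dk) × Fin d) ω => Sum.elim (fun r => wQ ω r e.2) (fun r => wK ω r e.2) e.1) ℙ →
    (∀ r a, ∫ ω, wK ω r a = 0) → (∀ r a, ∫ ω, (wK ω r a) ^ 2 = 0) →
    (Finset.univ.filter fun p : Fin dk × Fin d =>
      ¬ (fun ω => wK ω p.1 p.2) =ᵐ[ℙ] (fun _ => 0)).card ≤ n →
    ∫ ω, (c * ∑ r, (∑ a, xi a * wQ ω r a) * (∑ a, xp a * wK ω r a)) *
          (c * ∑ r, (∑ a, xj a * wQ ω r a) * (∑ a, xq a * wK ω r a)) = 0 := by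
  intro n
  induction n with
  | zero =>
    intro wQ wK hmQ hmK hind hmean hvar hcard
    have hall : ∀ p : Fin dk × Fin d, (fun ω => wK ω p.1 p.2) =ᵐ[ℙ] (fun _ => 0) := by
      intro p
      by_contra hne
      have hmem : p ∈ Finset.univ.filter fun p : Fin dk × Fin d =>
          ¬ (fun ω => wK ω p.1 p.2) =ᵐ[ℙ] (fun _ => 0) :=
        Finset.mem_filter.2 ⟨Finset.mem_univ _, hne⟩
      have := Finset.card_pos.2 ⟨p, hmem⟩
      omega
    have hae : ∀ᵐ ω ∂ℙ, ∀ p : Fin dk × Fin d, wK ω p.1 p.2 = 0 := ae_all_iff.2 hall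
    have hzero : (fun ω => (c * ∑ r, (∑ a, xi a * wQ ω r a) * (∑ a, xp a * wK ω r a)) *
          (c * ∑ r, (∑ a, xj a * wQ ω r a) * (∑ a, xq a * wK ω r a))) =ᵐ[ℙ]
          (fun _ => 0) := by
      filter_upwards [hae] with ω hω
      have h1 : ∑ r, (∑ a, xi a * wQ ω r a) * (∑ a, xp a * wK ω r a) = 0 :=
        Finset.sum_eq_zero fun r _ => by
          rw [Finset.sum_eq_zero (f := fun a => xp a * wK ω r a)
            fun a _ => by show _ * wK ω r a = 0; rw [hω (r, a)]; ring, mul_zero]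
      have h2 : ∑ r, (∑ a, xj a * wQ ω r a) * (∑ a, xq a * wK ω r a) = 0 :=
        Finset.sum_eq_zero fun r _ => by
          rw [Finset.sum_eq_zero (f := fun a => xq a * wK ω r a)
            fun a _ => by show _ * wK ω r a = 0; rw [hω (r, a)]; ring, mul_zero]
      rw [h1, h2]; ring
    rw [integral_congr_ae hzero, integral_zero]
  | succ n IH =>
    intro wQ wK hmQ hmK hind hmean hvar hcard
    by_cases hle : (Finset.univ.filter fun p : Fin dk × Fin d =>
        ¬ (fun ω => wK ω p.1 p.2) =ᵐ[ℙ] (fun _ => 0)).card ≤ n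
    · exact IH wQ wK hmQ hmK hind hmean hvar hle
    have hpos : 0 < (Finset.univ.filter fun p : Fin dk × Fin d =>
        ¬ (fun ω => wK ω p.1 p.2) =ᵐ[ℙ] (fun _ => 0)).card := by omega
    obtain ⟨⟨r₀, a₀⟩, hp₀⟩ := Finset.card_pos.1 hpos
    have hbadp : ¬ (fun ω => wK ω r₀ a₀) =ᵐ[ℙ] (fun _ => 0) := (Finset.mem_filter.1 hp₀).2
    have hbadInt : ¬ Integrable (fun ω => (wK ω r₀ a₀) ^ 2) ℙ := by
      intro h
      apply hbadp
      have h0 := (integral_eq_zero_iff_of_nonneg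
        (fun ω => sq_nonneg (wK ω r₀ a₀)) h).1 (hvar r₀ a₀)
      filter_upwards [h0] with ω hω
      exact pow_eq_zero_iff two_ne_zero |>.1 hω
    set ι := (Fin dk ⊕ Fin dk) × Fin d with hι
    set F : ι → Ω → ℝ :=
      fun e ω => Sum.elim (fun r => wQ ω r e.2) (fun r => wK ω r e.2) e.1 with hF
    have hFmeas : ∀ e, Measurable (F e) := by rintro ⟨(r | r), a⟩; exacts [hmQ r a, hmK r a]
    set e₀ : ι := (Sum.inr r₀, a₀) with he₀
    set wK' : Ω → Fin dk → Fin d → ℝ :=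
      fun ω r a => if r = r₀ ∧ a = a₀ then 0 else wK ω r a with hwK'
    set Z : Ω → ℝ := fun ω => wK ω r₀ a₀ with hZdef
    set V : Ω → ι → ℝ :=
      fun ω e => Sum.elim (fun r => wQ ω r e.2) (fun r => wK' ω r e.2) e.1 with hV
    have hmK' : ∀ r a, Measurable fun ω => wK' ω r a := by
      intro r a
      by_cases h : r = r₀ ∧ a = a₀
      · simpa [hwK', h] using measurable_const
      · simpa [hwK', h] using hmK r a
    have hVmeas : Measurable V :=
      measurable_pi_lambda _ (by rintro ⟨(r | r), a⟩; exacts [hmQ r a, hmK' r a])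
    -- independence of Z and V
    have hZV : IndepFun Z V ℙ := by
      have hdisj : Disjoint ({e₀} : Finset ι) (Finset.univ.erase e₀) :=
        Finset.disjoint_singleton_left.2 (Finset.notMem_erase _ _)
      have h1 := hind.indepFun_finset {e₀} (Finset.univ.erase e₀) hdisj hFmeas
      set φ₁ : (({e₀} : Finset ι) → ℝ) → ℝ :=
        fun u => u ⟨e₀, Finset.mem_singleton_self e₀⟩ with hφ₁def
      set T : Finset ι := Finset.univ.erase e₀ with hT
      set φ₂ : (↥T → ℝ) → ι → ℝ :=
        fun u e => if h : e = e₀ then 0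
          else u ⟨e, show e ∈ T from Finset.mem_erase.2 ⟨h, Finset.mem_univ e⟩⟩ with hφ₂def
      have hφ₁ : Measurable φ₁ := measurable_pi_apply _
      have hφ₂ : Measurable φ₂ := by
        refine measurable_pi_lambda _ fun e => ?_
        by_cases h : e = e₀
        · simpa [hφ₂def, h] using measurable_const
        · simpa [hφ₂def, h] using measurable_pi_apply _
      have h2 := h1.comp hφ₁ hφ₂
      have hZeq : (φ₁ ∘ fun ω (i : ({e₀} : Finset ι)) => F i ω) = Z := rfl
      have hVeq : (φ₂ ∘ fun ω (i : ↥T) => F i ω) = V := by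
        funext ω e
        show φ₂ (fun i : ↥T => F i ω) e = V ω e
        by_cases h : e = e₀
        · subst h
          simp [hφ₂def, hV, hwK', he₀]
        · obtain ⟨(r | r), a⟩ := e
          · simp [hφ₂def, h, hV, hF]
          · have hra : ¬ (r = r₀ ∧ a = a₀) := by
              intro ⟨h1', h2'⟩; exact h (by simp [he₀, h1', h2'])
            simp [hφ₂def, h, hV, hF, hwK', hra]
      rw [hZeq, hVeq] at h2
      exact h2
    -- quadratic decomposition in Z
    set SIP : (Fin d → ℝ) → (Fin d → ℝ) → (ι → ℝ) → ℝ :=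
      fun x y u => c * ∑ r, (∑ a, x a * u (Sum.inl r, a)) * (∑ a, y a * u (Sum.inr r, a))
      with hSIP
    set KP : (Fin d → ℝ) → (ι → ℝ) → ℝ :=
      fun x u => ∑ a, x a * u (Sum.inl r₀, a) with hKP
    set α : (ι → ℝ) → ℝ :=
      fun u => (c * xp a₀ * KP xi u) * (c * xq a₀ * KP xj u) with hα
    set β : (ι → ℝ) → ℝ :=
      fun u => (c * xp a₀ * KP xi u) * SIP xj xq u + (c * xq a₀ * KP xj u) * SIP xi xp u
      with hβ
    set γ : (ι → ℝ) → ℝ := fun u => SIP xi xp u * SIP xj xq u with hγ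
    have hSIPmeas : ∀ x y, Measurable (SIP x y) := by
      intro x y
      apply Measurable.const_mul
      refine Finset.measurable_sum _ fun r _ => Measurable.mul ?_ ?_ <;>
        exact Finset.measurable_sum _ fun a _ => (measurable_pi_apply _).const_mul _
    have hKPmeas : ∀ y, Measurable (KP y) :=
      fun y => Finset.measurable_sum _ fun a _ => (measurable_pi_apply _).const_mul _
    have hαm : Measurable α := ((hKPmeas xi).const_mul _).mul ((hKPmeas xj).const_mul _)
    have hβm : Measurable β :=
      (((hKPmeas xi).const_mul _).mul (hSIPmeas xj xq)).add
        (((hKPmeas xj).const_mul _).mul (hSIPmeas xi xp))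
    have hγm : Measurable γ := (hSIPmeas xi xp).mul (hSIPmeas xj xq)
    -- the per-factor affine decomposition
    have hfac : ∀ (x y : Fin d → ℝ) (ω : Ω),
        (c * ∑ r, (∑ a, x a * wQ ω r a) * (∑ a, y a * wK ω r a)) =
          SIP x y (V ω) + (c * y a₀ * KP x (V ω)) * Z ω := by
      intro x y ω
      have hKsum : ∀ r, (∑ a, y a * wK ω r a) =
          (∑ a, y a * V ω (Sum.inr r, a)) + (if r = r₀ then y a₀ * Z ω else 0) := by
        intro r
        have h1 : (∑ a, y a * wK ω r a) =
            ∑ a, (y a * V ω (Sum.inr r, a) + if r = r₀ ∧ a = a₀ then y a₀ * Z ω else 0) := by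
          refine Finset.sum_congr rfl fun a _ => ?_
          by_cases h : r = r₀ ∧ a = a₀
          · obtain ⟨h1', h2'⟩ := h
            subst h1'; subst h2'
            simp [hV, hwK', hZdef]
          · simp [hV, hwK', h]
        rw [h1, Finset.sum_add_distrib]
        congr 1
        by_cases hr : r = r₀
        · subst hr
          simp only [true_and, if_true]
          rw [Finset.sum_ite_eq' Finset.univ a₀ (fun _ => y a₀ * Z ω)]
          simp
        · simp [hr]
      have hQsum : ∀ r, (∑ a, x a * wQ ω r a) = ∑ a, x a * V ω (Sum.inl r, a) := by
        intro r
        refine Finset.sum_congr rfl fun a _ => ?_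
        simp [hV]
      calc (c * ∑ r, (∑ a, x a * wQ ω r a) * (∑ a, y a * wK ω r a))
          = c * ∑ r, (((∑ a, x a * V ω (Sum.inl r, a)) * (∑ a, y a * V ω (Sum.inr r, a)))
              + (if r = r₀ then (∑ a, x a * V ω (Sum.inl r, a)) * (y a₀ * Z ω) else 0)) := by
            congr 1
            refine Finset.sum_congr rfl fun r _ => ?_
            rw [hQsum r, hKsum r, mul_add, mul_ite, mul_zero]
        _ = SIP x y (V ω) + (c * y a₀ * KP x (V ω)) * Z ω := by
            rw [Finset.sum_add_distrib, Finset.sum_ite_eq' Finset.univ r₀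
              (fun r => (∑ a, x a * V ω (Sum.inl r, a)) * (y a₀ * Z ω))]
            simp only [Finset.mem_univ, if_true, hSIP, hKP]
            ring
    have hdecomp : ∀ ω,
        (c * ∑ r, (∑ a, xi a * wQ ω r a) * (∑ a, xp a * wK ω r a)) *
          (c * ∑ r, (∑ a, xj a * wQ ω r a) * (∑ a, xq a * wK ω r a)) =
        α (V ω) * Z ω ^ 2 + β (V ω) * Z ω + γ (V ω) := by
      intro ω
      rw [hfac xi xp ω, hfac xj xq ω]
      simp only [hα, hβ, hγ]
      ring
    by_cases hI : Integrable (fun ω =>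
        (c * ∑ r, (∑ a, xi a * wQ ω r a) * (∑ a, xp a * wK ω r a)) *
          (c * ∑ r, (∑ a, xj a * wQ ω r a) * (∑ a, xq a * wK ω r a))) ℙ
    · have hI' : Integrable (fun ω => α (V ω) * Z ω ^ 2 + β (V ω) * Z ω + γ (V ω)) ℙ :=
        hI.congr (Filter.Eventually.of_forall hdecomp)
      have hstep1 : ∫ ω, (c * ∑ r, (∑ a, xi a * wQ ω r a) * (∑ a, xp a * wK ω r a)) *
          (c * ∑ r, (∑ a, xj a * wQ ω r a) * (∑ a, xq a * wK ω r a)) =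
          ∫ ω, (α (V ω) * Z ω ^ 2 + β (V ω) * Z ω + γ (V ω)) :=
        integral_congr_ae (Filter.Eventually.of_forall hdecomp)
      have hstep2 := subst_integral Z V (hmK r₀ a₀) hVmeas hZV (hmean r₀ a₀) hbadInt
        α β γ hαm hβm hγm hI'
      rw [hstep1, hstep2]
      -- now apply the induction hypothesis to wQ'
      have hind' : iIndepFun
          (fun (e : (Fin dk ⊕ Fin dk) × Fin d) ω => Sum.elim (fun r => wQ ω r e.2) (fun r => wK' ω r e.2) e.1) ℙ := by
        set g : ι → ℝ → ℝ := fun e => if e = e₀ then (fun _ => 0) else id with hg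
        have hgm : ∀ e, Measurable (g e) := by
          intro e
          by_cases h : e = e₀
          · simpa [hg, h] using measurable_const
          · simpa [hg, h] using measurable_id
        have h3 := hind.comp g hgm
        have hfe : (fun (e : ι) ω => Sum.elim (fun r => wQ ω r e.2)
            (fun r => wK' ω r e.2) e.1) = fun e => g e ∘ F e := by
          funext e ω
          obtain ⟨(r | r), a⟩ := e
          · have hne : ((Sum.inl r : Fin dk ⊕ Fin dk), a) ≠ e₀ := by simp [he₀]
            simp [hg, hF, hne]
          · by_cases h : r = r₀ ∧ a = a₀
            · obtain ⟨h1', h2'⟩ := h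
              subst h1'; subst h2'
              simp [hg, hwK', hF, he₀]
            · have hne : ((Sum.inr r : Fin dk ⊕ Fin dk), a) ≠ e₀ := by
                intro hcontra
                rw [he₀] at hcontra
                exact h ⟨by simpa using congrArg (fun p => p.1) hcontra,
                  by simpa using congrArg (fun p => p.2) hcontra⟩
              simp [hg, hwK', hF, h, hne]
        rw [hfe]
        exact h3
      have hmean' : ∀ r a, ∫ ω, wK' ω r a = 0 := by
        intro r a
        by_cases h : r = r₀ ∧ a = a₀
        · simp [hwK', h]
        · simpa [hwK', h] using hmean r a
      have hvar' : ∀ r a, ∫ ω, (wK' ω r a) ^ 2 = 0 := by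
        intro r a
        by_cases h : r = r₀ ∧ a = a₀
        · simp [hwK', h]
        · simpa [hwK', h] using hvar r a
      have hcard' : (Finset.univ.filter fun p : Fin dk × Fin d =>
          ¬ (fun ω => wK' ω p.1 p.2) =ᵐ[ℙ] (fun _ => 0)).card ≤ n := by
        have hsub : (Finset.univ.filter fun p : Fin dk × Fin d =>
            ¬ (fun ω => wK' ω p.1 p.2) =ᵐ[ℙ] (fun _ => 0)) ⊆
            (Finset.univ.filter fun p : Fin dk × Fin d =>
            ¬ (fun ω => wK ω p.1 p.2) =ᵐ[ℙ] (fun _ => 0)).erase (r₀, a₀) := by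
          intro p hp
          have hp2 := (Finset.mem_filter.1 hp).2
          have hpne : p ≠ (r₀, a₀) := by
            intro hcontra
            subst hcontra
            refine hp2 (Filter.Eventually.of_forall fun ω => ?_)
            simp [hwK']
          refine Finset.mem_erase.2 ⟨hpne, Finset.mem_filter.2 ⟨Finset.mem_univ _, ?_⟩⟩
          intro hcontra
          refine hp2 ?_
          have hpcond : ¬ (p.1 = r₀ ∧ p.2 = a₀) := by
            intro ⟨h1', h2'⟩
            exact hpne (Prod.ext h1' h2')
          refine hcontra.mono fun ω hω => ?_
          simpa [hwK', hpcond] using hω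
        have h4 := Finset.card_le_card hsub
        rw [Finset.card_erase_of_mem hp₀] at h4
        omega
      exact IH wQ wK' hmQ hmK' hind' hmean' hvar' hcard'
    · rw [integral_undef hI]

/-- Second moment of scaled random attention logits:
`E[s_{ip} s_{jq}] = σ_Q² σ_K² ⟨x_i, x_j⟩ ⟨x_p, x_q⟩`. -/
theorem expectation_logit_product (d dk : ℕ) (hdk : 1 ≤ dk) (σQ σK : ℝ)
    {Ω : Type*} [MeasureSpace Ω] [IsProbabilityMeasure (ℙ : Measure Ω)]
    (xi xj xp xq : EuclideanSpace ℝ (Fin d))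
    (wQ wK : Ω → Fin dk → Fin d → ℝ)
    (hmeas : ∀ r a, Measurable (fun ω => wQ ω r a) ∧
        Measurable (fun ω => wK ω r a))
    (hindep : iIndepFun
        (fun (e : (Fin dk ⊕ Fin dk) × Fin d) ω => Sum.elim (fun r => wQ ω r e.2) (fun r => wK ω r e.2) e.1) ℙ)
    (hmeanQ : ∀ r a, ∫ ω, wQ ω r a = 0) (hmeanK : ∀ r a, ∫ ω, wK ω r a = 0)
    (hvarQ : ∀ r a, ∫ ω, (wQ ω r a) ^ 2 = σQ ^ 2)
    (hvarK : ∀ r a, ∫ ω, (wK ω r a) ^ 2 = σK ^ 2)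
    (sip sjq : Ω → ℝ)
    (hsip : ∀ ω, sip ω = (1 / Real.sqrt dk) *
        ∑ r, (∑ a, xi a * wQ ω r a) * (∑ a, xp a * wK ω r a))
    (hsjq : ∀ ω, sjq ω = (1 / Real.sqrt dk) *
        ∑ r, (∑ a, xj a * wQ ω r a) * (∑ a, xq a * wK ω r a)) :
    (∫ ω, sip ω * sjq ω) = σQ ^ 2 * σK ^ 2 * ⟪xi, xj⟫_ℝ * ⟪xp, xq⟫_ℝ := by
  have hmQ : ∀ r a, Measurable fun ω => wQ ω r a := fun r a => (hmeas r a).1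
  have hmK : ∀ r a, Measurable fun ω => wK ω r a := fun r a => (hmeas r a).2
  have hinner1 : ⟪xi, xj⟫_ℝ = ∑ a, xi a * xj a := by
    simp [PiLp.inner_apply, RCLike.inner_apply, mul_comm]
  have hinner2 : ⟪xp, xq⟫_ℝ = ∑ a, xp a * xq a := by
    simp [PiLp.inner_apply, RCLike.inner_apply, mul_comm]
  by_cases hQ2 : ∀ r a, Integrable (fun ω => (wQ ω r a) ^ 2) ℙ
  case neg =>
    push_neg at hQ2
    obtain ⟨r1, a1, hbad⟩ := hQ2
    have hσ : σQ ^ 2 = 0 := by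
      have h := hvarQ r1 a1
      rw [integral_undef hbad] at h
      exact h.symm
    rw [hσ, zero_mul, zero_mul, zero_mul]
    simp only [hsip, hsjq]
    exact zero_caseQ d dk (1 / Real.sqrt dk) xi xj xp xq _ wQ wK hmQ hmK hindep hmeanQ
      (fun r a => (hvarQ r a).trans hσ) le_rfl
  case pos =>
  by_cases hK2 : ∀ r a, Integrable (fun ω => (wK ω r a) ^ 2) ℙ
  case neg =>
    push_neg at hK2
    obtain ⟨r1, a1, hbad⟩ := hK2
    have hσ : σK ^ 2 = 0 := by
      have h := hvarK r1 a1
      rw [integral_undef hbad] at h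
      exact h.symm
    rw [hσ, mul_zero, zero_mul, zero_mul]
    simp only [hsip, hsjq]
    exact zero_caseK d dk (1 / Real.sqrt dk) xi xj xp xq _ wQ wK hmQ hmK hindep hmeanK
      (fun r a => (hvarK r a).trans hσ) le_rfl
  case pos =>
  -- main (square-integrable) case
  have hL2Q : ∀ r a, MemLp (fun ω => wQ ω r a) 2 ℙ := fun r a =>
    (memLp_two_iff_integrable_sq (hmQ r a).aestronglyMeasurable).2 (hQ2 r a)
  have hL2K : ∀ r a, MemLp (fun ω => wK ω r a) 2 ℙ := fun r a =>
    (memLp_two_iff_integrable_sq (hmK r a).aestronglyMeasurable).2 (hK2 r a)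
  have hIntQ : ∀ r a, Integrable (fun ω => wQ ω r a) ℙ := fun r a =>
    (hL2Q r a).integrable one_le_two
  have hIntK : ∀ r a, Integrable (fun ω => wK ω r a) ℙ := fun r a =>
    (hL2K r a).integrable one_le_two
  have hneQ : ∀ {r r' : Fin dk} {a b : Fin d}, ¬ (r = r' ∧ a = b) →
      ((Sum.inl r, a) : (Fin dk ⊕ Fin dk) × Fin d) ≠ (Sum.inl r', b) := by
    intro r r' a b h hc
    rw [Prod.ext_iff] at hc
    exact h ⟨Sum.inl.inj hc.1, hc.2⟩
  have hneK : ∀ {r r' : Fin dk} {a b : Fin d}, ¬ (r = r' ∧ a = b) →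
      ((Sum.inr r, a) : (Fin dk ⊕ Fin dk) × Fin d) ≠ (Sum.inr r', b) := by
    intro r r' a b h hc
    rw [Prod.ext_iff] at hc
    exact h ⟨Sum.inr.inj hc.1, hc.2⟩
  have hQQint : ∀ (r r' : Fin dk) (a b : Fin d),
      Integrable (fun ω => wQ ω r a * wQ ω r' b) ℙ := by
    intro r r' a b
    by_cases h : r = r' ∧ a = b
    · obtain ⟨rfl, rfl⟩ := h
      simpa [pow_two] using hQ2 r a
    · exact (hindep.indepFun (hneQ h)).integrable_mul (hIntQ r a) (hIntQ r' b)
  have hKKint : ∀ (r r' : Fin dk) (a b : Fin d),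
      Integrable (fun ω => wK ω r a * wK ω r' b) ℙ := by
    intro r r' a b
    by_cases h : r = r' ∧ a = b
    · obtain ⟨rfl, rfl⟩ := h
      simpa [pow_two] using hK2 r a
    · exact (hindep.indepFun (hneK h)).integrable_mul (hIntK r a) (hIntK r' b)
  have hQQval : ∀ (r r' : Fin dk) (a b : Fin d),
      ∫ ω, wQ ω r a * wQ ω r' b = if r = r' ∧ a = b then σQ ^ 2 else 0 := by
    intro r r' a b
    by_cases h : r = r' ∧ a = b
    · obtain ⟨rfl, rfl⟩ := h
      rw [if_pos ⟨rfl, rfl⟩]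
      simpa [pow_two] using hvarQ r a
    · rw [if_neg h]
      calc ∫ ω, wQ ω r a * wQ ω r' b
          = (∫ ω, wQ ω r a) * (∫ ω, wQ ω r' b) :=
            (hindep.indepFun (hneQ h)).integral_fun_mul_eq_mul_integral
              (hmQ r a).aestronglyMeasurable (hmQ r' b).aestronglyMeasurable
        _ = 0 := by rw [hmeanQ, hmeanQ, mul_zero]
  have hKKval : ∀ (r r' : Fin dk) (a b : Fin d),
      ∫ ω, wK ω r a * wK ω r' b = if r = r' ∧ a = b then σK ^ 2 else 0 := by
    intro r r' a b
    by_cases h : r = r' ∧ a = b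
    · obtain ⟨rfl, rfl⟩ := h
      rw [if_pos ⟨rfl, rfl⟩]
      simpa [pow_two] using hvarK r a
    · rw [if_neg h]
      calc ∫ ω, wK ω r a * wK ω r' b
          = (∫ ω, wK ω r a) * (∫ ω, wK ω r' b) :=
            (hindep.indepFun (hneK h)).integral_fun_mul_eq_mul_integral
              (hmK r a).aestronglyMeasurable (hmK r' b).aestronglyMeasurable
        _ = 0 := by rw [hmeanK, hmeanK, mul_zero]
  -- block products
  have hQprodeq : ∀ (r r' : Fin dk), (fun ω =>
      (∑ a, xi a * wQ ω r a) * (∑ b, xj b * wQ ω r' b)) =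
      fun ω => ∑ a, ∑ b, (xi a * xj b) * (wQ ω r a * wQ ω r' b) := by
    intro r r'
    funext ω
    rw [Finset.sum_mul_sum]
    exact Finset.sum_congr rfl fun a _ => Finset.sum_congr rfl fun b _ => by ring
  have hKprodeq : ∀ (r r' : Fin dk), (fun ω =>
      (∑ a, xp a * wK ω r a) * (∑ b, xq b * wK ω r' b)) =
      fun ω => ∑ a, ∑ b, (xp a * xq b) * (wK ω r a * wK ω r' b) := by
    intro r r'
    funext ω
    rw [Finset.sum_mul_sum]
    exact Finset.sum_congr rfl fun a _ => Finset.sum_congr rfl fun b _ => by ring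
  have hQprodInt : ∀ (r r' : Fin dk), Integrable (fun ω =>
      (∑ a, xi a * wQ ω r a) * (∑ b, xj b * wQ ω r' b)) ℙ := by
    intro r r'
    rw [hQprodeq r r']
    exact integrable_finset_sum _ fun a _ =>
      integrable_finset_sum _ fun b _ => (hQQint r r' a b).const_mul _
  have hKprodInt : ∀ (r r' : Fin dk), Integrable (fun ω =>
      (∑ a, xp a * wK ω r a) * (∑ b, xq b * wK ω r' b)) ℙ := by
    intro r r'
    rw [hKprodeq r r']
    exact integrable_finset_sum _ fun a _ =>
      integrable_finset_sum _ fun b _ => (hKKint r r' a b).const_mul _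
  have hQprodVal : ∀ (r r' : Fin dk), ∫ ω,
      (∑ a, xi a * wQ ω r a) * (∑ b, xj b * wQ ω r' b) =
      if r = r' then σQ ^ 2 * (∑ a, xi a * xj a) else 0 := by
    intro r r'
    rw [hQprodeq r r']
    rw [integral_finset_sum _ fun a _ =>
      integrable_finset_sum _ fun b _ => (hQQint r r' a b).const_mul _]
    have h1 : ∀ a : Fin d, ∫ ω, ∑ b, (xi a * xj b) * (wQ ω r a * wQ ω r' b) =
        ∑ b, (xi a * xj b) * (if r = r' ∧ a = b then σQ ^ 2 else 0) := by
      intro a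
      rw [integral_finset_sum _ fun b _ => (hQQint r r' a b).const_mul _]
      exact Finset.sum_congr rfl fun b _ => by
        rw [integral_const_mul, hQQval r r' a b]
    rw [Finset.sum_congr rfl fun a _ => h1 a]
    by_cases h : r = r'
    · subst h
      rw [if_pos rfl]
      have h2 : ∀ a : Fin d, ∑ b, (xi a * xj b) * (if r = r ∧ a = b then σQ ^ 2 else 0) =
          xi a * xj a * σQ ^ 2 := by
        intro a
        have h3 : ∀ b : Fin d, (xi a * xj b) * (if r = r ∧ a = b then σQ ^ 2 else 0) =
            if a = b then xi a * xj b * σQ ^ 2 else 0 := by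
          intro b
          by_cases hb : a = b <;> simp [hb]
        rw [Finset.sum_congr rfl fun b _ => h3 b, Finset.sum_ite_eq Finset.univ a
          (fun b => xi a * xj b * σQ ^ 2)]
        simp
      rw [Finset.sum_congr rfl fun a _ => h2 a, ← Finset.sum_mul, Finset.sum_mul]
      rw [Finset.mul_sum]
      exact Finset.sum_congr rfl fun a _ => by ring
    · rw [if_neg h]
      refine Finset.sum_eq_zero fun a _ => Finset.sum_eq_zero fun b _ => ?_
      have : ¬ (r = r' ∧ a = b) := fun hc => h hc.1
      simp [this]
  have hKprodVal : ∀ (r r' : Fin dk), ∫ ω,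
      (∑ a, xp a * wK ω r a) * (∑ b, xq b * wK ω r' b) =
      if r = r' then σK ^ 2 * (∑ a, xp a * xq a) else 0 := by
    intro r r'
    rw [hKprodeq r r']
    rw [integral_finset_sum _ fun a _ =>
      integrable_finset_sum _ fun b _ => (hKKint r r' a b).const_mul _]
    have h1 : ∀ a : Fin d, ∫ ω, ∑ b, (xp a * xq b) * (wK ω r a * wK ω r' b) =
        ∑ b, (xp a * xq b) * (if r = r' ∧ a = b then σK ^ 2 else 0) := by
      intro a
      rw [integral_finset_sum _ fun b _ => (hKKint r r' a b).const_mul _]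
      exact Finset.sum_congr rfl fun b _ => by
        rw [integral_const_mul, hKKval r r' a b]
    rw [Finset.sum_congr rfl fun a _ => h1 a]
    by_cases h : r = r'
    · subst h
      rw [if_pos rfl]
      have h2 : ∀ a : Fin d, ∑ b, (xp a * xq b) * (if r = r ∧ a = b then σK ^ 2 else 0) =
          xp a * xq a * σK ^ 2 := by
        intro a
        have h3 : ∀ b : Fin d, (xp a * xq b) * (if r = r ∧ a = b then σK ^ 2 else 0) =
            if a = b then xp a * xq b * σK ^ 2 else 0 := by
          intro b
          by_cases hb : a = b <;> simp [hb]
        rw [Finset.sum_congr rfl fun b _ => h3 b, Finset.sum_ite_eq Finset.univ a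
          (fun b => xp a * xq b * σK ^ 2)]
        simp
      rw [Finset.sum_congr rfl fun a _ => h2 a, Finset.mul_sum]
      exact Finset.sum_congr rfl fun a _ => by ring
    · rw [if_neg h]
      refine Finset.sum_eq_zero fun a _ => Finset.sum_eq_zero fun b _ => ?_
      have : ¬ (r = r' ∧ a = b) := fun hc => h hc.1
      simp [this]
  have hQpm : ∀ (r r' : Fin dk), Measurable (fun ω =>
      (∑ a, xi a * wQ ω r a) * (∑ b, xj b * wQ ω r' b)) := fun r r' =>
    (Finset.measurable_sum _ fun a _ => (hmQ r a).const_mul _).mul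
      (Finset.measurable_sum _ fun b _ => (hmQ r' b).const_mul _)
  have hKpm : ∀ (r r' : Fin dk), Measurable (fun ω =>
      (∑ a, xp a * wK ω r a) * (∑ b, xq b * wK ω r' b)) := fun r r' =>
    (Finset.measurable_sum _ fun a _ => (hmK r a).const_mul _).mul
      (Finset.measurable_sum _ fun b _ => (hmK r' b).const_mul _)
  have hQKind : ∀ (r r' : Fin dk), IndepFun
      (fun ω => (∑ a, xi a * wQ ω r a) * (∑ b, xj b * wQ ω r' b))
      (fun ω => (∑ a, xp a * wK ω r a) * (∑ b, xq b * wK ω r' b)) ℙ := by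
    intro r r'
    set ι := (Fin dk ⊕ Fin dk) × Fin d with hι
    set F : ι → Ω → ℝ :=
      fun e ω => Sum.elim (fun s => wQ ω s e.2) (fun s => wK ω s e.2) e.1 with hF
    have hFmeas : ∀ e, Measurable (F e) := by rintro ⟨(s | s), a⟩; exacts [hmQ s a, hmK s a]
    set S : Finset ι :=
      ({Sum.inl r, Sum.inl r'} : Finset (Fin dk ⊕ Fin dk)) ×ˢ Finset.univ with hS
    set T : Finset ι :=
      ({Sum.inr r, Sum.inr r'} : Finset (Fin dk ⊕ Fin dk)) ×ˢ Finset.univ with hT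
    have hdisj : Disjoint S T := by
      rw [Finset.disjoint_left]
      rintro ⟨(s | s), a⟩ h1 h2
      · have := (Finset.mem_product.1 h2).1
        simp at this
      · have := (Finset.mem_product.1 h1).1
        simp at this
    have h1 := hindep.indepFun_finset S T hdisj hFmeas
    set G : (↥S → ℝ) → ℝ := fun u =>
      (∑ a, xi a * u ⟨(Sum.inl r, a), by
        rw [hS]; exact Finset.mem_product.2 ⟨by simp, Finset.mem_univ a⟩⟩) *
      (∑ b, xj b * u ⟨(Sum.inl r', b), by
        rw [hS]; exact Finset.mem_product.2 ⟨by simp, Finset.mem_univ b⟩⟩) with hG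
    set H : (↥T → ℝ) → ℝ := fun u =>
      (∑ a, xp a * u ⟨(Sum.inr r, a), by
        rw [hT]; exact Finset.mem_product.2 ⟨by simp, Finset.mem_univ a⟩⟩) *
      (∑ b, xq b * u ⟨(Sum.inr r', b), by
        rw [hT]; exact Finset.mem_product.2 ⟨by simp, Finset.mem_univ b⟩⟩) with hH
    have hGm : Measurable G := by
      refine Measurable.mul ?_ ?_ <;>
        exact Finset.measurable_sum _ fun a _ => (measurable_pi_apply _).const_mul _
    have hHm : Measurable H := by
      refine Measurable.mul ?_ ?_ <;>
        exact Finset.measurable_sum _ fun a _ => (measurable_pi_apply _).const_mul _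
    exact h1.comp hGm hHm
  have htermInt : ∀ (r r' : Fin dk), Integrable (fun ω =>
      ((∑ a, xi a * wQ ω r a) * (∑ a, xp a * wK ω r a)) *
      ((∑ a, xj a * wQ ω r' a) * (∑ a, xq a * wK ω r' a))) ℙ := by
    intro r r'
    refine ((hQKind r r').integrable_mul (hQprodInt r r') (hKprodInt r r')).congr
      (Filter.Eventually.of_forall fun ω => ?_)
    simp only [Pi.mul_apply]
    ring
  have htermVal : ∀ (r r' : Fin dk), ∫ ω,
      ((∑ a, xi a * wQ ω r a) * (∑ a, xp a * wK ω r a)) *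
      ((∑ a, xj a * wQ ω r' a) * (∑ a, xq a * wK ω r' a)) =
      if r = r' then (σQ ^ 2 * (∑ a, xi a * xj a)) * (σK ^ 2 * (∑ a, xp a * xq a))
      else 0 := by
    intro r r'
    calc ∫ ω, ((∑ a, xi a * wQ ω r a) * (∑ a, xp a * wK ω r a)) *
          ((∑ a, xj a * wQ ω r' a) * (∑ a, xq a * wK ω r' a))
        = ∫ ω, ((∑ a, xi a * wQ ω r a) * (∑ b, xj b * wQ ω r' b)) *
            ((∑ a, xp a * wK ω r a) * (∑ b, xq b * wK ω r' b)) :=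
          integral_congr_ae (Filter.Eventually.of_forall fun ω => by ring)
      _ = (∫ ω, (∑ a, xi a * wQ ω r a) * (∑ b, xj b * wQ ω r' b)) *
            (∫ ω, (∑ a, xp a * wK ω r a) * (∑ b, xq b * wK ω r' b)) :=
          (hQKind r r').integral_fun_mul_eq_mul_integral (hQpm r r').aestronglyMeasurable
            (hKpm r r').aestronglyMeasurable
      _ = (if r = r' then σQ ^ 2 * (∑ a, xi a * xj a) else 0) *
            (if r = r' then σK ^ 2 * (∑ a, xp a * xq a) else 0) := by
          rw [hQprodVal, hKprodVal]
      _ = if r = r' then (σQ ^ 2 * (∑ a, xi a * xj a)) *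
            (σK ^ 2 * (∑ a, xp a * xq a)) else 0 := by
          by_cases h : r = r' <;> simp [h]
  set c : ℝ := 1 / Real.sqrt dk with hc
  have hexpand : ∀ (u v : Fin dk → ℝ),
      (c * ∑ r, u r) * (c * ∑ r, v r) = ∑ r, ∑ r', (c * c) * (u r * v r') := by
    intro u v
    calc (c * ∑ r, u r) * (c * ∑ r, v r)
        = (c * c) * ((∑ r, u r) * (∑ r, v r)) := by ring
      _ = (c * c) * ∑ r, ∑ r', u r * v r' := by rw [Finset.sum_mul_sum]
      _ = ∑ r, ∑ r', (c * c) * (u r * v r') := by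
          rw [Finset.mul_sum]
          exact Finset.sum_congr rfl fun r _ => by rw [Finset.mul_sum]
  have hexp : ∀ ω, sip ω * sjq ω = ∑ r, ∑ r', (c * c) *
      (((∑ a, xi a * wQ ω r a) * (∑ a, xp a * wK ω r a)) *
       ((∑ a, xj a * wQ ω r' a) * (∑ a, xq a * wK ω r' a))) := by
    intro ω
    rw [hsip ω, hsjq ω]
    exact hexpand _ _
  calc ∫ ω, sip ω * sjq ω
      = ∫ ω, ∑ r, ∑ r', (c * c) *
          (((∑ a, xi a * wQ ω r a) * (∑ a, xp a * wK ω r a)) *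
           ((∑ a, xj a * wQ ω r' a) * (∑ a, xq a * wK ω r' a))) :=
        integral_congr_ae (Filter.Eventually.of_forall hexp)
    _ = ∑ r, ∑ r', (c * c) * ∫ ω,
          (((∑ a, xi a * wQ ω r a) * (∑ a, xp a * wK ω r a)) *
           ((∑ a, xj a * wQ ω r' a) * (∑ a, xq a * wK ω r' a))) := by
        rw [integral_finset_sum _ fun r _ =>
          integrable_finset_sum _ fun r' _ => (htermInt r r').const_mul _]
        refine Finset.sum_congr rfl fun r _ => ?_
        rw [integral_finset_sum _ fun r' _ => (htermInt r r').const_mul _]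
        exact Finset.sum_congr rfl fun r' _ => integral_const_mul _ _
    _ = ∑ r : Fin dk, (c * c) *
          ((σQ ^ 2 * (∑ a, xi a * xj a)) * (σK ^ 2 * (∑ a, xp a * xq a))) := by
        refine Finset.sum_congr rfl fun r _ => ?_
        have h5 : ∀ r' : Fin dk, (c * c) * ∫ ω,
            (((∑ a, xi a * wQ ω r a) * (∑ a, xp a * wK ω r a)) *
             ((∑ a, xj a * wQ ω r' a) * (∑ a, xq a * wK ω r' a))) =
            if r = r' then (c * c) * ((σQ ^ 2 * (∑ a, xi a * xj a)) *
              (σK ^ 2 * (∑ a, xp a * xq a))) else 0 := by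
          intro r'
          rw [htermVal r r']
          by_cases h : r = r' <;> simp [h]
        rw [Finset.sum_congr rfl fun r' _ => h5 r', Finset.sum_ite_eq Finset.univ r]
        simp
    _ = (dk : ℝ) * ((c * c) *
          ((σQ ^ 2 * (∑ a, xi a * xj a)) * (σK ^ 2 * (∑ a, xp a * xq a)))) := by
        rw [Finset.sum_const, Finset.card_univ, Fintype.card_fin, nsmul_eq_mul]
    _ = σQ ^ 2 * σK ^ 2 * ⟪xi, xj⟫_ℝ * ⟪xp, xq⟫_ℝ := by
        have hdk0 : (dk : ℝ) ≠ 0 := by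
          have : (0 : ℝ) < dk := by exact_mod_cast Nat.lt_of_lt_of_le Nat.zero_lt_one hdk
          exact ne_of_gt this
        have hcc : c * c = 1 / (dk : ℝ) := by
          rw [hc, div_mul_div_comm, one_mul, Real.mul_self_sqrt (Nat.cast_nonneg dk)]
        rw [hcc, hinner1, hinner2]
        field_simp
end
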